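/- Let S be a semigroup, b,c ∈ S¹, and ρ, σ congruences on S with bσ left cancellable and cσ right cancellable in (S/σ)¹. Then ρ ⊆ σ if and only if ρ_{b,c} ⊆ σ_{b,c}. -/

import Mathlib

/-- Any product `x * ↑s * y` in `S¹ = WithOne S` with middle factor in `S` lies in `S`. -/
theorem exists_coe_eq {S : Type*} [Semigroup S] (x y : WithOne S) (s : S) :
    ∃ z : S, (z : WithOne S) = x * ↑s * y := by
  induction x using WithOne.recOneCoe with
  | one => induction y using WithOne.recOneCoe with
    | one => exact ⟨s, by simp⟩
    | coe b => exact ⟨s * b, by simp⟩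
  | coe a => induction y using WithOne.recOneCoe with
    | one => exact ⟨a * s, by simp⟩
    | coe b => exact ⟨a * s * b, by simp [mul_assoc]⟩

/-- The element `x s y ∈ S` for `x, y ∈ S¹`, `s ∈ S`. -/
noncomputable def sand3 {S : Type*} [Semigroup S] (x : WithOne S) (s : S) (y : WithOne S) : S :=
  (exists_coe_eq x y s).choose

theorem sand3_spec {S : Type*} [Semigroup S] (x : WithOne S) (s : S) (y : WithOne S) :
    (↑(sand3 x s y) : WithOne S) = x * ↑s * y :=
  (exists_coe_eq x y s).choose_spec

/-- `sand b c s = b s c ∈ S` for `b, c ∈ S¹`, `s ∈ S`. -/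
noncomputable def sand {S : Type*} [Semigroup S] (b c : WithOne S) (s : S) : S := sand3 b s c

section Sandwich

variable {S : Type*} [Semigroup S]

lemma coe_sand (b c : WithOne S) (s : S) : (↑(sand b c s) : WithOne S) = b * ↑s * c :=
  sand3_spec b s c

lemma sand_eq_of_coe_eq {b c : WithOne S} {s u : S} (h : (↑u : WithOne S) = b * ↑s * c) :
    sand b c s = u :=
  WithOne.coe_inj.mp ((coe_sand b c s).trans h.symm)

@[simp] lemma sand_one_one (s : S) : sand (1 : WithOne S) 1 s = s :=
  sand_eq_of_coe_eq (by simp)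

@[simp] lemma sand_coe_one (a s : S) : sand (↑a) (1 : WithOne S) s = a * s :=
  sand_eq_of_coe_eq (by simp)

@[simp] lemma sand_one_coe (d s : S) : sand (1 : WithOne S) (↑d) s = s * d :=
  sand_eq_of_coe_eq (by simp)

lemma sand_eq_sand_one_sand (b c : WithOne S) (s : S) :
    sand b c s = sand b 1 (sand 1 c s) :=
  (sand_eq_of_coe_eq (by simp only [coe_sand, mul_one, one_mul, mul_assoc])).symm

variable {ρ : S → S → Prop}

lemma sand_one_rel_sand_one (hleft : ∀ a s t, ρ s t → ρ (a * s) (a * t))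
    (b : WithOne S) {s t : S} (h : ρ s t) : ρ (sand b 1 s) (sand b 1 t) := by
  induction b using WithOne.recOneCoe with
  | one => simpa using h
  | coe a => simpa using hleft a s t h

lemma one_sand_rel_one_sand (hright : ∀ d s t, ρ s t → ρ (s * d) (t * d))
    (c : WithOne S) {s t : S} (h : ρ s t) : ρ (sand 1 c s) (sand 1 c t) := by
  induction c using WithOne.recOneCoe with
  | one => simpa using h
  | coe d => simpa using hright d s t h

lemma sand_rel_sand (b c : WithOne S) (hleft : ∀ a s t, ρ s t → ρ (a * s) (a * t))
    (hright : ∀ d s t, ρ s t → ρ (s * d) (t * d)) {s t : S} (h : ρ s t) :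
    ρ (sand b c s) (sand b c t) := by
  rw [sand_eq_sand_one_sand b c s, sand_eq_sand_one_sand b c t]
  exact sand_one_rel_sand_one hleft b (one_sand_rel_one_sand hright c h)

end Sandwich

theorem rho_subset_sigma_iff_general {S : Type*} [Semigroup S]
    (b c : WithOne S) (ρ σ : S → S → Prop)
    (hρequiv : Equivalence ρ)
    (hρcomp : ∀ s t u v : S, ρ s t → ρ u v → ρ (s * u) (t * v))
    (hlc : ∀ s t : S, σ (sand b 1 s) (sand b 1 t) → σ s t)
    (hrc : ∀ s t : S, σ (sand 1 c s) (sand 1 c t) → σ s t) :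
    (∀ s t : S, ρ s t → σ s t) ↔
      (∀ s t : S, ρ (sand b c s) (sand b c t) → σ (sand b c s) (sand b c t)) := by
  refine ⟨fun H s t h => H _ _ h, fun H s t h => ?_⟩
  have hbc := H s t <| sand_rel_sand b c
    (fun a _ _ hst => hρcomp _ _ _ _ (hρequiv.refl a) hst)
    (fun d _ _ hst => hρcomp _ _ _ _ hst (hρequiv.refl d)) h
  rw [sand_eq_sand_one_sand b c s, sand_eq_sand_one_sand b c t] at hbc
  exact hrc s t (hlc _ _ hbc)

/-- If `bσ` and `cσ` are left and right cancellable in `(S/σ)¹`, then for congruences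
`ρ, σ` on `S`: `ρ ⊆ σ` iff `ρ_{b,c} ⊆ σ_{b,c}`. -/
theorem rho_subset_sigma_iff {S : Type*} [Semigroup S]
    (b c : WithOne S) (ρ σ : S → S → Prop)
    (hρequiv : Equivalence ρ)
    (hρcomp : ∀ s t u v : S, ρ s t → ρ u v → ρ (s * u) (t * v))
    (hσequiv : Equivalence σ)
    (hσcomp : ∀ s t u v : S, σ s t → σ u v → σ (s * u) (t * v))
    (hlc : ∀ s t : S, σ (sand b 1 s) (sand b 1 t) → σ s t)
    (hrc : ∀ s t : S, σ (sand 1 c s) (sand 1 c t) → σ s t) :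
    (∀ s t : S, ρ s t → σ s t) ↔
      (∀ s t : S, ρ (sand b c s) (sand b c t) → σ (sand b c s) (sand b c t)) :=
  rho_subset_sigma_iff_general b c ρ σ hρequiv hρcomp hlc hrc
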